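/- Let G be a countably infinite amenable group and T a syndetic finite tiling of G with set of shapes S_T. Then for every n ∈ ℕ there exist a nonempty finite subset K of G and ε > 0 such that for every shape S ∈ S_T and every (K, ε)-invariant nonempty finite subset F of G, F contains at least n T-tiles of the shape S (i.e., there are at least n elements c ∈ C(S) with Sc ⊆ F). -/

import Mathlib

open Filter Set
open scoped ENNReal

noncomputable section

/-! ### Basic combinatorial operations on finsets (with classical decidability) -/

/-- Symmetric difference of two finsets. -/
noncomputable def finsetSymmDiff {G : Type*} (A B : Finset G) : Finset G :=
  letI : DecidableEq G := Classical.decEq G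
  (A \ B) ∪ (B \ A)

/-- Left translate `gF = {g*f : f ∈ F}` of a finset. -/
noncomputable def finsetLMul {G : Type*} [Group G] (g : G) (F : Finset G) : Finset G :=
  letI : DecidableEq G := Classical.decEq G
  F.image (fun x => g * x)

/-- Pointwise product `TF = {t*f : t ∈ T, f ∈ F}` of finsets. -/
noncomputable def finsetMul {G : Type*} [Group G] (T F : Finset G) : Finset G :=
  letI : DecidableEq G := Classical.decEq G
  Finset.image₂ (· * ·) T F

/-! ### Følner sequences and amenability -/

/-- `F` is a Følner sequence of `G`: a sequence of nonempty finite subsets with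
`|F n △ g F n| / |F n| → 0` for every `g ∈ G`. -/
def IsFolnerSeq {G : Type*} [Group G] (F : ℕ → Finset G) : Prop :=
  (∀ n, (F n).Nonempty) ∧
    ∀ g : G, Filter.Tendsto
      (fun n => ((finsetSymmDiff (F n) (finsetLMul g (F n))).card : ℝ) / ((F n).card : ℝ))
      Filter.atTop (nhds 0)

/-- A countable group is amenable if it admits a Følner sequence. -/
def IsAmenable (G : Type*) [Group G] : Prop := ∃ F : ℕ → Finset G, IsFolnerSeq F

/-- A subset `S ⊆ G` is syndetic if `G = F S` for some finite `F`. -/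
def IsSyndetic {G : Type*} [Group G] (S : Set G) : Prop :=
  ∃ F : Finset G, ∀ g : G, ∃ f ∈ F, ∃ s ∈ S, g = f * s

/-- `B(F,T) = {g ∈ G : Tg ∩ F ≠ ∅ and Tg ∩ (G∖F) ≠ ∅}`. -/
def folnerBoundary {G : Type*} [Group G] (T F : Finset G) : Set G :=
  {g : G | (∃ t ∈ T, t * g ∈ F) ∧ (∃ t ∈ T, t * g ∉ F)}

/-- `F` is `(T,ε)`-invariant if `|B(F,T)| / |F| < ε`. -/
def IsTInvariant {G : Type*} [Group G] (T : Finset G) (ε : ℝ) (F : Finset G) : Prop :=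
  ((folnerBoundary T F).ncard : ℝ) / (F.card : ℝ) < ε

/-! ### Tilings -/

/-- The right translate `Sc = {s*c : s ∈ S}` of a set `S ⊆ G`. -/
def tileTranslate {G : Type*} [Group G] (S : Set G) (c : G) : Set G := (fun s => s * c) '' S

/-- A tiling of `G` is a collection of pairwise disjoint nonempty finite subsets covering `G`. -/
def IsTiling {G : Type*} [Group G] (T : Set (Set G)) : Prop :=
  (∀ t ∈ T, t.Finite ∧ t.Nonempty) ∧ ⋃₀ T = Set.univ ∧
    ∀ t ∈ T, ∀ t' ∈ T, t ≠ t' → Disjoint t t'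

/-- The center `C(S) = {c ∈ G : Sc ∈ T}` of a shape `S` with respect to a tiling `T`. -/
def tilingCenter {G : Type*} [Group G] (T : Set (Set G)) (S : Set G) : Set G :=
  {c : G | tileTranslate S c ∈ T}

/-- `T` is a finite tiling with set of shapes `Shapes`. -/
def IsFiniteTiling {G : Type*} [Group G] (T : Set (Set G)) (Shapes : Set (Set G)) : Prop :=
  IsTiling T ∧ Shapes.Finite ∧ (∀ S ∈ Shapes, S.Finite ∧ S.Nonempty) ∧
    ∀ t ∈ T, ∃ S ∈ Shapes, ∃ c : G, t = tileTranslate S c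

/-! ### Shifts and subshifts -/

/-- The full `G`-shift on `K^G`: `(σ g x) h = x (h g)`. -/
def shift (G K : Type*) [Group G] : G → (G → K) → (G → K) := fun g x h => x (h * g)

/-- A subshift is a closed shift-invariant subset of `K^G`. -/
def IsSubshift {G K : Type*} [Group G] [TopologicalSpace K] (M : Set (G → K)) : Prop :=
  IsClosed M ∧ ∀ g : G, ∀ x ∈ M, shift G K g x ∈ M

/-- A minimal subshift: a nonempty subshift in which every orbit is dense. -/
def IsMinimalSubshift {G K : Type*} [Group G] [TopologicalSpace K] (M : Set (G → K)) : Prop :=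
  M.Nonempty ∧ IsSubshift M ∧ ∀ x ∈ M, M ⊆ closure {y | ∃ g : G, y = shift G K g x}

/-! ### Group actions -/

/-- A continuous action of `G` on `X` given by `act : G → X → X`. -/
structure IsContAction {G X : Type*} [Group G] [TopologicalSpace X] (act : G → X → X) : Prop where
  one : ∀ x, act 1 x = x
  mul : ∀ g h x, act (g * h) x = act g (act h x)
  cont : ∀ g, Continuous (act g)

/-- The restriction of an action to an invariant subset (junk value outside). -/
noncomputable def restrictAct {G X : Type*} (act : G → X → X) (M : Set X) : G → M → M :=
  fun g x =>
    letI := Classical.propDecidable (act g (x : X) ∈ M)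
    if h : act g (x : X) ∈ M then ⟨act g (x : X), h⟩ else x

/-- A minimal subsystem: a nonempty closed invariant subset in which every orbit is dense. -/
def IsMinimalSubsystem {G X : Type*} [TopologicalSpace X] (act : G → X → X) (M : Set X) : Prop :=
  M.Nonempty ∧ IsClosed M ∧ (∀ g : G, ∀ x ∈ M, act g x ∈ M) ∧
    ∀ x ∈ M, M ⊆ closure {y | ∃ g : G, y = act g x}

/-! ### Compatible metrics -/

/-- `d` is a compatible metric on the topological space `X`. -/
structure IsCompatibleMetric (X : Type*) [TopologicalSpace X] (d : X → X → ℝ) : Prop where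
  refl : ∀ x, d x x = 0
  eq_of : ∀ {x y}, d x y = 0 → x = y
  symm : ∀ x y, d x y = d y x
  triangle : ∀ x y z, d x z ≤ d x y + d y z
  compatible : ∀ s : Set X, IsOpen s ↔ ∀ x ∈ s, ∃ ε > 0, {y | d x y < ε} ⊆ s

/-! ### Widim, polyhedra, mean dimension -/

/-- `f` is an `ε`-embedding with respect to the (pseudo)metric `d`. -/
def IsEpsEmbedding {X Y : Type*} [TopologicalSpace X] [TopologicalSpace Y]
    (d : X → X → ℝ) (ε : ℝ) (f : X → Y) : Prop :=
  Continuous f ∧ ∀ x y, f x = f y → d x y < ε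

/-- There is an `ε`-embedding of `X` into (the space of) a finite simplicial complex of
dimension at most `n` sitting in some Euclidean space. -/
def ExistsPolyEmbedding {X : Type*} [TopologicalSpace X] (d : X → X → ℝ) (ε : ℝ) (n : ℕ) : Prop :=
  ∃ (N : ℕ) (S : Geometry.SimplicialComplex ℝ (EuclideanSpace ℝ (Fin N))),
    S.faces.Finite ∧ (∀ s ∈ S.faces, s.card ≤ n + 1) ∧
    ∃ f : X → S.space, IsEpsEmbedding d ε f

/-- `Widim_ε(X,d)`: the least dimension of a (finite) polyhedron admitting an
`ε`-embedding of `X`. -/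
noncomputable def widim {X : Type*} [TopologicalSpace X] (d : X → X → ℝ) (ε : ℝ) : ℝ≥0∞ :=
  sInf {x : ℝ≥0∞ | ∃ n : ℕ, x = (n : ℝ≥0∞) ∧ ExistsPolyEmbedding d ε n}

/-- The dynamical metric `ρ_F(x,y) = max_{g ∈ F} ρ(gx,gy)`. -/
noncomputable def dynDist {G X : Type*} (act : G → X → X) (d : X → X → ℝ) (F : Finset G)
    (x y : X) : ℝ :=
  sSup ((fun g => d (act g x) (act g y)) '' (F : Set G))

/-- The mean dimension of the action `act` computed with the metric `d` and the Følner
sequence `F`: `lim_{ε→0} lim_n Widim_ε(X,ρ_{F n})/|F n|` (the limit in `ε` is a supremum by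
monotonicity, and the inner limit is a limsup). -/
noncomputable def mdimWith {G X : Type*} [Group G] [TopologicalSpace X]
    (act : G → X → X) (d : X → X → ℝ) (F : ℕ → Finset G) : ℝ≥0∞ :=
  ⨆ ε ∈ Set.Ioi (0 : ℝ),
    Filter.limsup (fun n => widim (dynDist act d (F n)) ε / ((F n).card : ℝ≥0∞)) Filter.atTop

/-- The action `act` has mean dimension `r`: for every compatible metric and every Følner
sequence the computed value is `r` (the value is independent of these choices). -/
def HasMdim {G X : Type*} [Group G] [TopologicalSpace X] (act : G → X → X) (r : ℝ≥0∞) : Prop :=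
  ∀ d : X → X → ℝ, IsCompatibleMetric X d →
    ∀ F : ℕ → Finset G, IsFolnerSeq F → mdimWith act d F = r

/-! ### Covering dimension -/

/-- The Lebesgue covering dimension of `X` is at most `n`: every open cover has an open
refinement of multiplicity at most `n+1`. -/
def CovDimLE (X : Type*) [TopologicalSpace X] (n : ℕ) : Prop :=
  ∀ U : Set (Set X), (∀ u ∈ U, IsOpen u) → ⋃₀ U = Set.univ →
    ∃ V : Set (Set X), (∀ v ∈ V, IsOpen v) ∧ ⋃₀ V = Set.univ ∧
      (∀ v ∈ V, ∃ u ∈ U, v ⊆ u) ∧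
      ∀ x : X, {v | v ∈ V ∧ x ∈ v}.Finite ∧ {v | v ∈ V ∧ x ∈ v}.ncard ≤ n + 1

/-- The Lebesgue covering dimension, as an extended nonnegative real. -/
noncomputable def covDim (X : Type*) [TopologicalSpace X] : ℝ≥0∞ :=
  sInf {x : ℝ≥0∞ | ∃ n : ℕ, x = (n : ℝ≥0∞) ∧ CovDimLE X n}

/-- `X` is finite-dimensional. -/
def TopFiniteDimensional (X : Type*) [TopologicalSpace X] : Prop := ∃ n : ℕ, CovDimLE X n

/-! ### Density -/

/-- The density `δ(J)` of a subset `J ⊆ G`: the supremum over all Følner sequences of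
`limsup_n |J ∩ F n| / |F n|`. -/
noncomputable def upperDensity (G : Type*) [Group G] (J : Set G) : ℝ≥0∞ :=
  ⨆ (F : ℕ → Finset G) (_ : IsFolnerSeq F),
    Filter.limsup (fun n =>
      letI : ∀ g : G, Decidable (g ∈ J) := fun g => Classical.propDecidable _
      (((F n).filter (fun g => g ∈ J)).card : ℝ≥0∞) / ((F n).card : ℝ≥0∞)) Filter.atTop



/-!
Choose one finite `A` with `G = A · C(S)` for every shape `S`, and a finite `K ∋ 1` containing
`S A⁻¹` for every shape, of size at least `2n|A|`. If `F` is `(K, 1/2)`-invariant, more than half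
of `F` lies in its `K`-core `D = {g ∈ F : Kg ⊆ F}`; in particular `D` is nonempty, so
`|K| ≤ |F| < 2|D|`. Writing `g ∈ D` as `g = ac` with `a ∈ A`, `c ∈ C(S)`, the tile
`Sc = S a⁻¹ g ⊆ Kg` lies in `F`, so `D ⊆ A · {c ∈ C(S) : Sc ⊆ F}` and
`2n|A| ≤ |K| < 2|D| ≤ 2|A| · #{c ∈ C(S) : Sc ⊆ F}`.
-/

open scoped Pointwise

section Core

variable {G : Type*} [Group G]

def folnerCore [DecidableEq G] (K F : Finset G) : Finset G :=
  {g ∈ F | ∀ t ∈ K, t * g ∈ F}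

theorem folnerBoundary_subset_inv_mul [DecidableEq G] (K F : Finset G) :
    folnerBoundary K F ⊆ ↑(K⁻¹ * F) := by
  rintro g ⟨⟨t, ht, htg⟩, -⟩
  have h := Finset.mul_mem_mul (Finset.inv_mem_inv ht) htg
  rwa [inv_mul_cancel_left] at h

theorem folnerBoundary_finite (K F : Finset G) : (folnerBoundary K F).Finite := by
  classical
  exact (K⁻¹ * F).finite_toSet.subset (folnerBoundary_subset_inv_mul K F)

theorem folnerCore_subset [DecidableEq G] (K F : Finset G) : folnerCore K F ⊆ F :=
  Finset.filter_subset _ F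

variable [DecidableEq G] {K F : Finset G}

theorem sdiff_folnerCore_subset_folnerBoundary (hK : (1 : G) ∈ K) :
    ↑(F \ folnerCore K F) ⊆ folnerBoundary K F := by
  intro g hg
  obtain ⟨hgF, hgD⟩ := Finset.mem_sdiff.mp (Finset.mem_coe.mp hg)
  have : ¬ ∀ t ∈ K, t * g ∈ F := fun h => hgD (Finset.mem_filter.mpr ⟨hgF, h⟩)
  push Not at this
  obtain ⟨t, ht, htg⟩ := this
  exact ⟨⟨1, hK, by simpa using hgF⟩, ⟨t, ht, htg⟩⟩

theorem card_le_card_folnerCore_add_ncard_folnerBoundary (hK : (1 : G) ∈ K) :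
    F.card ≤ (folnerCore K F).card + (folnerBoundary K F).ncard := by
  have hsdiff : (F \ folnerCore K F).card ≤ (folnerBoundary K F).ncard := by
    rw [← Set.ncard_coe_finset]
    exact Set.ncard_le_ncard (sdiff_folnerCore_subset_folnerBoundary hK)
      (folnerBoundary_finite K F)
  have := Finset.card_sdiff_add_card_eq_card (folnerCore_subset K F)
  omega

theorem card_le_card_of_mem_folnerCore {g : G} (hg : g ∈ folnerCore K F) : K.card ≤ F.card := by
  have hKg : K.image (· * g) ⊆ F := by
    simp only [Finset.image_subset_iff]
    exact (Finset.mem_filter.mp hg).2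
  calc K.card = (K.image (· * g)).card :=
        (Finset.card_image_of_injective K (mul_left_injective g)).symm
    _ ≤ F.card := Finset.card_le_card hKg

theorem IsTInvariant.card_lt_two_mul_card_folnerCore (hK : (1 : G) ∈ K) (hF : F.Nonempty)
    (hinv : IsTInvariant K (1 / 2) F) : K.card < 2 * (folnerCore K F).card := by
  have hF0 : (0 : ℝ) < F.card := by exact_mod_cast hF.card_pos
  have hB : ((folnerBoundary K F).ncard : ℝ) < F.card / 2 := by
    rw [IsTInvariant, div_lt_iff₀ hF0] at hinv
    linarith
  have hsplit : (F.card : ℝ) ≤ (folnerCore K F).card + (folnerBoundary K F).ncard := by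
    exact_mod_cast card_le_card_folnerCore_add_ncard_folnerBoundary hK
  have hFD : F.card < 2 * (folnerCore K F).card := by
    have : (F.card : ℝ) < 2 * (folnerCore K F).card := by linarith
    exact_mod_cast this
  obtain ⟨g, hg⟩ : (folnerCore K F).Nonempty := by
    rw [← Finset.card_pos]
    omega
  have := card_le_card_of_mem_folnerCore hg
  omega

end Core

section Tiles

variable {G : Type*} [Group G]

theorem IsSyndetic.exists_common_finset {ι : Type*} {s : Set ι} (hs : s.Finite) {C : ι → Set G}
    (h : ∀ i ∈ s, IsSyndetic (C i)) :
    ∃ A : Finset G, ∀ i ∈ s, ∀ g : G, ∃ a ∈ A, ∃ c ∈ C i, g = a * c := by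
  classical
  choose! A hA using h
  refine ⟨hs.toFinset.biUnion A, fun i hi g => ?_⟩
  obtain ⟨a, ha, c, hc, rfl⟩ := hA i hi g
  exact ⟨a, Finset.mem_biUnion.mpr ⟨i, hs.mem_toFinset.mpr hi, ha⟩, c, hc, rfl⟩

theorem finite_setOf_tileTranslate_subset {S : Set G} (hS : S.Nonempty) (C : Set G)
    (F : Finset G) : {c | c ∈ C ∧ tileTranslate S c ⊆ (F : Set G)}.Finite := by
  obtain ⟨s, hs⟩ := hS
  refine (F.finite_toSet.preimage (mul_right_injective s).injOn).subset ?_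
  rintro c ⟨-, hc⟩
  exact hc ⟨s, hs, rfl⟩

variable [DecidableEq G] {K F A : Finset G} {S C : Set G}

theorem folnerCore_subset_mul_tiles (hAC : ∀ g : G, ∃ a ∈ A, ∃ c ∈ C, g = a * c)
    (hSK : ∀ s ∈ S, ∀ a ∈ A, s * a⁻¹ ∈ K) :
    ↑(folnerCore K F) ⊆ (A : Set G) * {c | c ∈ C ∧ tileTranslate S c ⊆ (F : Set G)} := by
  intro g hg
  obtain ⟨a, ha, c, hc, rfl⟩ := hAC g
  refine ⟨a, ha, c, ⟨hc, ?_⟩, rfl⟩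
  rintro _ ⟨s, hs, rfl⟩
  have := (Finset.mem_filter.mp hg).2 _ (hSK s hs a ha)
  simpa [mul_assoc] using this

theorem card_folnerCore_le_mul_ncard_tiles (hAC : ∀ g : G, ∃ a ∈ A, ∃ c ∈ C, g = a * c)
    (hSK : ∀ s ∈ S, ∀ a ∈ A, s * a⁻¹ ∈ K) (hS : S.Nonempty) :
    (folnerCore K F).card ≤ A.card * {c | c ∈ C ∧ tileTranslate S c ⊆ ↑F}.ncard := by
  have hX := finite_setOf_tileTranslate_subset hS C F
  rw [Set.ncard_eq_toFinset_card _ hX]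
  calc (folnerCore K F).card ≤ (A * hX.toFinset).card := by
        apply Finset.card_le_card
        rw [← Finset.coe_subset, Finset.coe_mul, Set.Finite.coe_toFinset]
        exact folnerCore_subset_mul_tiles hAC hSK
    _ ≤ A.card * hX.toFinset.card := Finset.card_mul_le

end Tiles

theorem syndetic_tiling_many_tiles_in_invariant_sets_general
    (G : Type) [Group G] [Infinite G]
    (T : Set (Set G)) (Shapes : Set (Set G)) (hT : IsFiniteTiling T Shapes)
    (hsyn : ∀ S ∈ Shapes, IsSyndetic (tilingCenter T S)) :
    ∀ n : ℕ, ∃ K : Finset G, K.Nonempty ∧ ∃ ε : ℝ, 0 < ε ∧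
      ∀ S ∈ Shapes, ∀ F : Finset G, F.Nonempty → IsTInvariant K ε F →
        n ≤ {c : G | c ∈ tilingCenter T S ∧ tileTranslate S c ⊆ (F : Set G)}.ncard := by
  classical
  intro n
  obtain ⟨-, hShapes, hShape, -⟩ := hT
  obtain ⟨A, hA⟩ := IsSyndetic.exists_common_finset hShapes hsyn
  have hU : (⋃₀ Shapes).Finite := hShapes.sUnion fun S hS => (hShape S hS).1
  set K₀ := insert (1 : G) (hU.toFinset * A⁻¹)
  obtain ⟨K, hK₀, hKcard⟩ :=
    Infinite.exists_superset_card_eq K₀ (max K₀.card (2 * (A.card * n))) (le_max_left _ _)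
  have h1K : (1 : G) ∈ K := hK₀ (Finset.mem_insert_self _ _)
  refine ⟨K, ⟨1, h1K⟩, 1 / 2, one_half_pos, fun S hS F hF hinv => ?_⟩
  have hSK : ∀ s ∈ S, ∀ a ∈ A, s * a⁻¹ ∈ K := fun s hs a ha =>
    hK₀ (Finset.mem_insert_of_mem (Finset.mul_mem_mul (hU.mem_toFinset.mpr ⟨S, hS, hs⟩)
      (Finset.inv_mem_inv ha)))
  set X := {c : G | c ∈ tilingCenter T S ∧ tileTranslate S c ⊆ (F : Set G)}
  have htiles : (folnerCore K F).card ≤ A.card * X.ncard :=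
    card_folnerCore_le_mul_ncard_tiles (hA S hS) hSK (hShape S hS).2
  have hlt : 2 * (A.card * n) < 2 * (A.card * X.ncard) :=
    calc 2 * (A.card * n) ≤ K.card := hKcard ▸ le_max_right _ _
      _ < 2 * (folnerCore K F).card := hinv.card_lt_two_mul_card_folnerCore h1K hF
      _ ≤ 2 * (A.card * X.ncard) := Nat.mul_le_mul_left 2 htiles
  exact (Nat.lt_of_mul_lt_mul_left (Nat.lt_of_mul_lt_mul_left hlt)).le

/-- For a syndetic finite tiling `T` of a countably infinite amenable group `G`
with shape set `Shapes`, and any `n ∈ ℕ`, there are a nonempty finite `K ⊆ G` and `ε > 0` such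
that every `(K,ε)`-invariant nonempty finite `F ⊆ G` contains at least `n` `T`-tiles of every
shape `S ∈ Shapes`. -/
theorem syndetic_tiling_many_tiles_in_invariant_sets
    (G : Type) [Group G] [Countable G] [Infinite G] (hG : IsAmenable G)
    (T : Set (Set G)) (Shapes : Set (Set G)) (hT : IsFiniteTiling T Shapes)
    (hsyn : ∀ S ∈ Shapes, IsSyndetic (tilingCenter T S)) :
    ∀ n : ℕ, ∃ K : Finset G, K.Nonempty ∧ ∃ ε : ℝ, 0 < ε ∧
      ∀ S ∈ Shapes, ∀ F : Finset G, F.Nonempty → IsTInvariant K ε F →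
        n ≤ {c : G | c ∈ tilingCenter T S ∧ tileTranslate S c ⊆ (F : Set G)}.ncard :=
  syndetic_tiling_many_tiles_in_invariant_sets_general G T Shapes hT hsyn
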